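/- arXiv:1012.5862 — 2 statements merged into one kernel-verified Lean document; each statement's English description precedes it below -/
import Mathlib

section
/- In the advertisement model with interior best responses, the optimal investment c* is a strictly decreasing function of the side-payment price p^t: if p^t_x < p^t_y and (c_x, D_x), (c_y, D_y) solve the respective fixed-point systems D = (2p^r α/(4αp^r - β^2))(D_0(c) + α(1-δ)p^t - α p^r) and D_0'(c) = 1/(D y'(D) + y(D) - p^t), with D·y(D) concave increasing and D_0 strictly concave increasing, then c_x > c_y. -/
/-- In the advertisement model with interior best responses, the optimal investment
is strictly decreasing in the side-payment price: `p^t_x < p^t_y` implies `c_x > c_y`. -/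
theorem investment_decreasing_in_side_payment
    (α β pr δ : ℝ) (hα : 0 < α) (hβ : 0 < β) (hpr : 0 < pr)
    (hδ : δ ∈ Set.Icc (0 : ℝ) 1) (h : 4 * α * pr > β ^ 2)
    (D0 F : ℝ → ℝ)
    (hD0diff : DifferentiableOn ℝ D0 (Set.Ioi 0))
    (hD0mono : StrictMonoOn D0 (Set.Ioi 0))
    (hD0conc : StrictConcaveOn ℝ (Set.Ioi 0) D0)
    (hFdiff : DifferentiableOn ℝ F (Set.Ioi 0))
    (hFmono : MonotoneOn F (Set.Ioi 0))
    (hFconc : ConcaveOn ℝ (Set.Ioi 0) F)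
    (ptx pty cx Dx cy Dy : ℝ) (hpt : ptx < pty)
    (hcx : 0 < cx) (hDx : 0 < Dx) (hcy : 0 < cy) (hDy : 0 < Dy)
    (hGx : 0 < deriv F Dx - ptx) (hGy : 0 < deriv F Dy - pty)
    (hfixx : Dx = 2 * pr * α / (4 * α * pr - β ^ 2) *
        (D0 cx + α * (1 - δ) * ptx - α * pr))
    (hfocx : deriv D0 cx = 1 / (deriv F Dx - ptx))
    (hfixy : Dy = 2 * pr * α / (4 * α * pr - β ^ 2) *
        (D0 cy + α * (1 - δ) * pty - α * pr))
    (hfocy : deriv D0 cy = 1 / (deriv F Dy - pty)) :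
    cx > cy := by
  by_contra hle
  push_neg at hle
  have hD0at : ∀ x ∈ Set.Ioi (0:ℝ), DifferentiableAt ℝ D0 x := fun x hx =>
    (hD0diff x hx).differentiableAt (isOpen_Ioi.mem_nhds hx)
  have hFat : ∀ x ∈ Set.Ioi (0:ℝ), DifferentiableAt ℝ F x := fun x hx =>
    (hFdiff x hx).differentiableAt (isOpen_Ioi.mem_nhds hx)
  -- step 1 : Dx ≤ Dy
  have hk : 0 < 2 * pr * α / (4 * α * pr - β ^ 2) := by
    apply div_pos (by positivity); linarith
  have hc0 : D0 cx ≤ D0 cy := hD0mono.monotoneOn hcx hcy hle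
  have hcoef : 0 ≤ α * (1 - δ) := by
    have := hδ.2; nlinarith
  have hD : Dx ≤ Dy := by
    rw [hfixx, hfixy]
    apply mul_le_mul_of_nonneg_left _ hk.le
    nlinarith [mul_le_mul_of_nonneg_left hpt.le hcoef]
  -- step 2 : deriv F Dy ≤ deriv F Dx
  have hF' : deriv F Dy ≤ deriv F Dx :=
    hFconc.antitoneOn_deriv hFat hDx hDy hD
  -- step 3 : deriv D0 cx < deriv D0 cy
  have hlt : deriv D0 cx < deriv D0 cy := by
    rw [hfocx, hfocy]
    apply one_div_lt_one_div_of_lt hGy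
    linarith
  -- step 4 : strict concavity contradicts this
  have hge : deriv D0 cy ≤ deriv D0 cx :=
    (hD0conc.strictAntiOn_deriv hD0at).antitoneOn hcx hcy hle
  linarith
end

section
/- For normally distributed valuations with mean μ > 0 and variance σ², the function Ω(p) = 2p·e^{-(p-μ)²/(2σ²)} + (2 - p(p-μ)/σ²)·∫_p^∞ e^{-(t-μ)²/(2σ²)} dt is positive for all p > 0. -/
/-!
If the coefficient `2 - p(p-μ)/σ²` is nonnegative, `Ω(p)` is a positive term plus a nonnegative
one. Otherwise `p(p-μ) > 2σ² > 0` forces `p > μ`, and the Mills-ratio bound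
`∫_p^∞ e^{-(t-μ)²/(2σ²)} dt ≤ σ²/(p-μ) · e^{-(p-μ)²/(2σ²)}`, obtained by inserting the factor
`(t-μ)/(p-μ) ≥ 1` and integrating `(t-μ)/σ² · e^{-(t-μ)²/(2σ²)}` exactly, gives
`Ω(p) ≥ (p + 2σ²/(p-μ)) · e^{-(p-μ)²/(2σ²)} > 0`.
-/

open MeasureTheory Filter Topology Set

section GaussianTail

variable (μ σ : ℝ)

theorem hasDerivAt_neg_exp_neg_sq_div (x : ℝ) :
    HasDerivAt (fun t ↦ -Real.exp (-(t - μ) ^ 2 / (2 * σ ^ 2)))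
      ((x - μ) / σ ^ 2 * Real.exp (-(x - μ) ^ 2 / (2 * σ ^ 2))) x := by
  have hinner :
      HasDerivAt (fun t ↦ -(t - μ) ^ 2 / (2 * σ ^ 2)) (-(2 * (x - μ)) / (2 * σ ^ 2)) x := by
    simpa using (((hasDerivAt_id x).sub_const μ).pow 2).neg.div_const (2 * σ ^ 2)
  exact ((Real.hasDerivAt_exp _).comp x hinner).neg.congr_deriv (by ring)

variable {σ}

theorem tendsto_exp_neg_sq_div_atTop (hσ : σ ≠ 0) :
    Tendsto (fun t ↦ Real.exp (-(t - μ) ^ 2 / (2 * σ ^ 2))) atTop (𝓝 0) := by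
  refine Real.tendsto_exp_atBot.comp (Tendsto.atBot_div_const (by positivity) ?_)
  exact tendsto_neg_atTop_atBot.comp
    ((tendsto_pow_atTop two_ne_zero).comp (tendsto_atTop_add_const_right _ _ tendsto_id))

theorem integrable_exp_neg_sq_div (hσ : σ ≠ 0) :
    Integrable (fun t ↦ Real.exp (-(t - μ) ^ 2 / (2 * σ ^ 2))) := by
  convert (integrable_exp_neg_mul_sq (b := 1 / (2 * σ ^ 2)) (by positivity)).comp_sub_right μ
    using 2
  field_simp

theorem integrableOn_Ioi_mul_exp_neg_sq_div {p : ℝ} (hσ : σ ≠ 0) (hp : μ ≤ p) :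
    IntegrableOn (fun t ↦ (t - μ) / σ ^ 2 * Real.exp (-(t - μ) ^ 2 / (2 * σ ^ 2))) (Ioi p) := by
  refine integrableOn_Ioi_deriv_of_nonneg (Continuous.continuousWithinAt (by fun_prop))
    (fun x _ ↦ hasDerivAt_neg_exp_neg_sq_div μ σ x) (fun x hx ↦ ?_)
    (by simpa using (tendsto_exp_neg_sq_div_atTop μ hσ).neg)
  have : 0 ≤ x - μ := by linarith [mem_Ioi.mp hx]
  positivity

theorem integral_Ioi_mul_exp_neg_sq_div {p : ℝ} (hσ : σ ≠ 0) (hp : μ ≤ p) :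
    ∫ t in Ioi p, (t - μ) / σ ^ 2 * Real.exp (-(t - μ) ^ 2 / (2 * σ ^ 2)) =
      Real.exp (-(p - μ) ^ 2 / (2 * σ ^ 2)) := by
  rw [integral_Ioi_of_hasDerivAt_of_nonneg (Continuous.continuousWithinAt (by fun_prop))
    (fun x _ ↦ hasDerivAt_neg_exp_neg_sq_div μ σ x) (fun x hx ↦ ?_)
    (by simpa using (tendsto_exp_neg_sq_div_atTop μ hσ).neg)]
  · ring
  have : 0 ≤ x - μ := by linarith [mem_Ioi.mp hx]
  positivity

theorem setIntegral_Ioi_exp_neg_sq_div_le {p : ℝ} (hσ : σ ≠ 0) (hp : μ < p) :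
    ∫ t in Ioi p, Real.exp (-(t - μ) ^ 2 / (2 * σ ^ 2)) ≤
      σ ^ 2 / (p - μ) * Real.exp (-(p - μ) ^ 2 / (2 * σ ^ 2)) := by
  have hpμ : 0 < p - μ := sub_pos.mpr hp
  calc ∫ t in Ioi p, Real.exp (-(t - μ) ^ 2 / (2 * σ ^ 2))
      ≤ ∫ t in Ioi p, σ ^ 2 / (p - μ) *
          ((t - μ) / σ ^ 2 * Real.exp (-(t - μ) ^ 2 / (2 * σ ^ 2))) := by
        refine setIntegral_mono_on (integrable_exp_neg_sq_div μ hσ).integrableOn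
          ((integrableOn_Ioi_mul_exp_neg_sq_div μ hσ hp.le).const_mul _) measurableSet_Ioi
          fun t ht ↦ ?_
        have hratio : 1 ≤ (t - μ) / (p - μ) := (one_le_div hpμ).mpr (by linarith [mem_Ioi.mp ht])
        calc Real.exp (-(t - μ) ^ 2 / (2 * σ ^ 2))
            ≤ (t - μ) / (p - μ) * Real.exp (-(t - μ) ^ 2 / (2 * σ ^ 2)) :=
              le_mul_of_one_le_left (Real.exp_pos _).le hratio
          _ = _ := by field_simp
    _ = σ ^ 2 / (p - μ) * Real.exp (-(p - μ) ^ 2 / (2 * σ ^ 2)) := by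
        rw [integral_const_mul, integral_Ioi_mul_exp_neg_sq_div μ hσ hp.le]

end GaussianTail

theorem omega_positive_general (μ σ : ℝ) (hσ : 0 < σ) :
    ∀ p > (0 : ℝ),
      0 < 2 * p * Real.exp (-(p - μ) ^ 2 / (2 * σ ^ 2)) +
          (2 - p * (p - μ) / σ ^ 2) *
            ∫ t in Set.Ioi p, Real.exp (-(t - μ) ^ 2 / (2 * σ ^ 2)) := by
  intro p hp
  set E := Real.exp (-(p - μ) ^ 2 / (2 * σ ^ 2))
  set I := ∫ t in Set.Ioi p, Real.exp (-(t - μ) ^ 2 / (2 * σ ^ 2))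
  rcases le_or_gt 0 (2 - p * (p - μ) / σ ^ 2) with hcoef | hcoef
  · exact add_pos_of_pos_of_nonneg (by positivity)
      (mul_nonneg hcoef (setIntegral_nonneg measurableSet_Ioi fun t _ ↦ (Real.exp_pos _).le))
  have hpμ : μ < p := by
    by_contra! hpμ
    have : p * (p - μ) / σ ^ 2 ≤ 0 :=
      div_nonpos_of_nonpos_of_nonneg (mul_nonpos_of_nonneg_of_nonpos hp.le (by linarith))
        (by positivity)
    linarith
  have hpμ' : 0 < p - μ := sub_pos.mpr hpμ
  calc 0 < (p + 2 * σ ^ 2 / (p - μ)) * E := by positivity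
    _ = 2 * p * E + (2 - p * (p - μ) / σ ^ 2) * (σ ^ 2 / (p - μ) * E) := by
        field_simp
        ring
    _ ≤ 2 * p * E + (2 - p * (p - μ) / σ ^ 2) * I := by
        have hI : I ≤ σ ^ 2 / (p - μ) * E := setIntegral_Ioi_exp_neg_sq_div_le μ hσ.ne' hpμ
        exact add_le_add_right (mul_le_mul_of_nonpos_left hI hcoef.le) _

/-- For normal valuations with mean `μ > 0` and variance `σ²`, the function
`Ω(p) = 2p e^{-(p-μ)²/(2σ²)} + (2 - p(p-μ)/σ²) ∫_p^∞ e^{-(t-μ)²/(2σ²)} dt`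
is positive for all `p > 0`. -/
theorem omega_positive (μ σ : ℝ) (hμ : 0 < μ) (hσ : 0 < σ) :
    ∀ p > (0 : ℝ),
      0 < 2 * p * Real.exp (-(p - μ) ^ 2 / (2 * σ ^ 2)) +
          (2 - p * (p - μ) / σ ^ 2) *
            ∫ t in Set.Ioi p, Real.exp (-(t - μ) ^ 2 / (2 * σ ^ 2)) :=
  omega_positive_general μ σ hσ
end
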